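/- arXiv:math/0611701 — 8 statements merged into one kernel-verified Lean document; each statement's English description precedes it below -/
import Mathlib

section
/- If u : T → S has a left adjoint, then every u-final u-surjective family in T is strict epimorphic. -/
open CategoryTheory

universe w v u v₂ u₂

variable {C : Type u} [Category.{v} C]

/-- `g` is compatible with `f` (families with the same domains `Xd`). -/
def Compatible {ι : Type w} {Xd : ι → C} {X Y : C}
    (f : ∀ i, Xd i ⟶ X) (g : ∀ i, Xd i ⟶ Y) : Prop :=
  ∀ {Z : C} (a b : ι) (xa : Z ⟶ Xd a) (xb : Z ⟶ Xd b),
    xa ≫ f a = xb ≫ f b → xa ≫ g a = xb ≫ g b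

/-- A family is strict epimorphic if every compatible family factors uniquely through it. -/
def StrictEpiFamily {ι : Type w} {Xd : ι → C} {X : C} (f : ∀ i, Xd i ⟶ X) : Prop :=
  ∀ {Y : C} (g : ∀ i, Xd i ⟶ Y), Compatible f g →
    ∃! h : X ⟶ Y, ∀ i, f i ≫ h = g i

variable {B : Type u₂} [Category.{v₂} B]

/-- A family `f i : Xd i ⟶ X` is `u`-final if for every family `g i : Xd i ⟶ Y` and every
`φ : u.obj X ⟶ u.obj Y` with `u.map (g i) = u.map (f i) ≫ φ`, there is a unique
`h : X ⟶ Y` over `φ` with `f i ≫ h = g i` for all `i`. -/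
def UFinal (u : C ⥤ B) {ι : Type w} {Xd : ι → C} {X : C} (f : ∀ i, Xd i ⟶ X) : Prop :=
  ∀ {Y : C} (g : ∀ i, Xd i ⟶ Y) (φ : u.obj X ⟶ u.obj Y),
    (∀ i, u.map (g i) = u.map (f i) ≫ φ) →
    ∃! h : X ⟶ Y, u.map h = φ ∧ ∀ i, f i ≫ h = g i

/-- A family is `u`-surjective when its image under `u` is strict epimorphic. -/
def USurjective (u : C ⥤ B) {ι : Type w} {Xd : ι → C} {X : C} (f : ∀ i, Xd i ⟶ X) : Prop :=
  StrictEpiFamily (fun i => u.map (f i))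

/-- If `u` has a left adjoint, every `u`-final `u`-surjective family is strict epimorphic. -/
theorem strictEpiFamily_of_uFinal_uSurjective (u : C ⥤ B) [u.IsRightAdjoint]
    {ι : Type w} {Xd : ι → C} {X : C} (f : ∀ i, Xd i ⟶ X)
    (hfin : UFinal u f) (hsur : USurjective u f) : StrictEpiFamily f := by
  intro Y g hg
  obtain ⟨L, ⟨adj⟩⟩ := Functor.IsRightAdjoint.exists_leftAdjoint (right := u)
  have hcompat : Compatible (fun i => u.map (f i)) (fun i => u.map (g i)) := by
    intro Z a b xa xb hx
    have h1 : (adj.homEquiv Z (Xd a)).symm xa ≫ f a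
        = (adj.homEquiv Z (Xd b)).symm xb ≫ f b := by
      apply (adj.homEquiv Z X).injective
      rw [adj.homEquiv_naturality_right, adj.homEquiv_naturality_right]
      simpa using hx
    have h2 := hg a b ((adj.homEquiv Z (Xd a)).symm xa) ((adj.homEquiv Z (Xd b)).symm xb) h1
    have := congrArg (adj.homEquiv Z Y) (by simpa using h2)
    rw [adj.homEquiv_naturality_right, adj.homEquiv_naturality_right] at this
    simpa using this
  obtain ⟨φ, hφ, hφuniq⟩ := hsur (fun i => u.map (g i)) hcompat
  obtain ⟨h, ⟨hmap, hh⟩, huniq⟩ := hfin g φ (fun i => (hφ i).symm)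
  refine ⟨h, hh, ?_⟩
  intro h' hh'
  refine huniq h' ⟨?_, hh'⟩
  apply hφuniq
  intro i
  rw [← hh' i, u.map_comp]
end

section
/- If u : T → S is faithful and has both a left adjoint and a right adjoint, then a family in T is strict epimorphic if and only if it is u-final and u-surjective. -/
open CategoryTheory

universe w v u v₂ u₂

variable {C : Type u} [Category.{v} C]

variable {B : Type u₂} [Category.{v₂} B]

/-- If `u` is faithful and has both a left and a right adjoint, a family is strict
epimorphic iff it is `u`-final and `u`-surjective. -/
theorem strictEpiFamily_iff_uFinal_uSurjective (u : C ⥤ B) [u.Faithful]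
    [u.IsRightAdjoint] [u.IsLeftAdjoint]
    {ι : Type w} {Xd : ι → C} {X : C} (f : ∀ i, Xd i ⟶ X) :
    StrictEpiFamily f ↔ UFinal u f ∧ USurjective u f := by
  constructor
  · intro hf
    have adjR := Adjunction.ofIsLeftAdjoint u
    have hsurj : USurjective u f := by
      intro Y g hg
      have hcomp : Compatible f (fun i => (adjR.homEquiv _ Y) (g i)) := by
        intro Z a b xa xb hx
        have hx' : u.map xa ≫ u.map (f a) = u.map xb ≫ u.map (f b) := by
          rw [← u.map_comp, ← u.map_comp, hx]
        have := hg a b (u.map xa) (u.map xb) hx'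
        have e1 : xa ≫ (adjR.homEquiv _ Y) (g a)
            = (adjR.homEquiv _ Y) (u.map xa ≫ g a) :=
          (adjR.homEquiv_naturality_left xa (g a)).symm
        have e2 : xb ≫ (adjR.homEquiv _ Y) (g b)
            = (adjR.homEquiv _ Y) (u.map xb ≫ g b) :=
          (adjR.homEquiv_naturality_left xb (g b)).symm
        simp only [e1, e2, this]
      obtain ⟨h, hh, huniq⟩ := hf _ hcomp
      refine ⟨(adjR.homEquiv X Y).symm h, ?_, ?_⟩
      · intro i
        calc u.map (f i) ≫ (adjR.homEquiv X Y).symm h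
            = (adjR.homEquiv _ Y).symm (f i ≫ h) := by
              rw [adjR.homEquiv_naturality_left_symm]
          _ = g i := by rw [hh i]; simp
      · intro φ' hφ'
        have : (adjR.homEquiv X Y) φ' = h := by
          apply huniq
          intro i
          rw [← adjR.homEquiv_naturality_left (f i) φ', hφ' i]
        rw [← this]; simp
    refine ⟨?_, hsurj⟩
    intro Y g φ hφ
    have hcomp : Compatible f g := by
      intro Z a b xa xb hx
      apply u.map_injective
      rw [u.map_comp, u.map_comp, hφ a, hφ b, ← Category.assoc, ← Category.assoc,
        ← u.map_comp, ← u.map_comp, hx]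
    obtain ⟨h, hh, huniq⟩ := hf g hcomp
    have hcompB : Compatible (fun i => u.map (f i)) (fun i => u.map (f i) ≫ φ) := by
      intro Z a b xa xb hx
      dsimp at hx ⊢
      rw [← Category.assoc, ← Category.assoc, hx]
    obtain ⟨ψ, hψ, hψuniq⟩ := hsurj _ hcompB
    have huh : u.map h = φ := by
      rw [hψuniq (u.map h) fun i => by
        dsimp; rw [← u.map_comp, hh i, hφ i],
        hψuniq φ fun i => rfl]
    refine ⟨h, ⟨huh, hh⟩, ?_⟩
    rintro h' ⟨-, hh'⟩
    exact huniq h' hh'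
  · rintro ⟨hfin, hsurj⟩
    intro Y g hcomp
    have adjL := Adjunction.ofIsRightAdjoint u
    have hcompB : Compatible (fun i => u.map (f i)) (fun i => u.map (g i)) := by
      intro Z a b xa xb hx
      dsimp at hx ⊢
      have hx' : (adjL.homEquiv Z (Xd a)).symm xa ≫ f a
          = (adjL.homEquiv Z (Xd b)).symm xb ≫ f b := by
        rw [← adjL.homEquiv_naturality_right_symm, ← adjL.homEquiv_naturality_right_symm, hx]
      have := hcomp a b _ _ hx'
      calc xa ≫ u.map (g a)
          = (adjL.homEquiv Z Y) ((adjL.homEquiv Z (Xd a)).symm xa ≫ g a) := by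
            rw [adjL.homEquiv_naturality_right]; simp
        _ = (adjL.homEquiv Z Y) ((adjL.homEquiv Z (Xd b)).symm xb ≫ g b) := by rw [this]
        _ = xb ≫ u.map (g b) := by rw [adjL.homEquiv_naturality_right]; simp
    obtain ⟨φ, hφ, hφuniq⟩ := hsurj _ hcompB
    obtain ⟨h, ⟨huh, hh⟩, huniq⟩ := hfin g φ fun i => (hφ i).symm
    refine ⟨h, hh, ?_⟩
    intro h' hh'
    have : u.map h' = φ := hφuniq (u.map h') fun i => by
      dsimp; rw [← u.map_comp, hh' i]
    exact huniq h' ⟨this, hh'⟩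
end

section
/- If u : T → S is faithful and creates and preserves strict epimorphic families (an E-functor), then a family in T is strict epimorphic if and only if it is u-final and u-surjective. -/
open CategoryTheory

universe w v u v₂ u₂

variable {C : Type u} [Category.{v} C]

variable {B : Type u₂} [Category.{v₂} B]

/-- `u` creates strict epimorphic families: every strict epimorphic family in the base with
given lifts of the domains lifts to a strict epimorphic family over it. -/
def CreatesStrictEpiFamilies (u : C ⥤ B) : Prop :=
  ∀ {ι : Type w} {S0 : B} (Xd : ι → C) (φ : ∀ i, u.obj (Xd i) ⟶ S0),
    StrictEpiFamily φ →
    ∃ (X : C) (eX : u.obj X = S0) (f : ∀ i, Xd i ⟶ X),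
      StrictEpiFamily f ∧ ∀ i, u.map (f i) = φ i ≫ eqToHom eX.symm

/-- `u` preserves strict epimorphic families. -/
def PreservesStrictEpiFamilies (u : C ⥤ B) : Prop :=
  ∀ {ι : Type w} {Xd : ι → C} {X : C} (f : ∀ i, Xd i ⟶ X),
    StrictEpiFamily f → StrictEpiFamily (fun i => u.map (f i))

/-- For an `E`-functor (faithful, creating and preserving strict epimorphic families),
a family is strict epimorphic iff it is `u`-final and `u`-surjective. -/
theorem strictEpiFamily_iff_uFinal_uSurjective_of_eFunctor (u : C ⥤ B) [u.Faithful]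
    (hcr : CreatesStrictEpiFamilies.{w} u) (hpr : PreservesStrictEpiFamilies.{w} u)
    {ι : Type w} {Xd : ι → C} {X : C} (f : ∀ i, Xd i ⟶ X) :
    StrictEpiFamily f ↔ UFinal u f ∧ USurjective u f := by
  constructor
  · intro hf
    refine ⟨?_, hpr f hf⟩
    intro Y g φ hφ
    have hcomp : Compatible f g := by
      intro Z a b xa xb hx
      apply u.map_injective
      rw [u.map_comp, u.map_comp, hφ a, hφ b, ← Category.assoc, ← Category.assoc,
        ← u.map_comp, ← u.map_comp, hx]
    obtain ⟨h, hh, huniq⟩ := hf g hcomp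
    refine ⟨h, ⟨?_, hh⟩, fun h' hh' => huniq h' hh'.2⟩
    have hcomp' : Compatible (fun i => u.map (f i)) (fun i => u.map (g i)) := by
      intro Z a b xa xb hx
      simp only [hφ a, hφ b, ← Category.assoc, hx]
    obtain ⟨ψ, _, hψu⟩ := hpr f hf (fun i => u.map (g i)) hcomp'
    have h1 : u.map h = ψ := hψu _ (fun i => by rw [← u.map_comp, hh i])
    have h2 : φ = ψ := hψu _ (fun i => (hφ i).symm)
    rw [h1, h2]
  · rintro ⟨hfin, hsur⟩
    intro Y g hcomp
    obtain ⟨X', eX, f', hf'se, hf'⟩ := hcr Xd (fun i => u.map (f i)) hsur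
    have key : ∀ {Z : C} (a b : ι) (xa : Z ⟶ Xd a) (xb : Z ⟶ Xd b),
        xa ≫ f' a = xb ≫ f' b → xa ≫ f a = xb ≫ f b := by
      intro Z a b xa xb hx
      apply u.map_injective
      have := congrArg (fun t => u.map t ≫ eqToHom eX) hx
      simp only [u.map_comp, hf', Category.assoc, eqToHom_trans, eqToHom_refl,
        Category.comp_id] at this
      simpa [u.map_comp] using this
    have hcomp' : Compatible f' g := fun a b xa xb hx => hcomp a b xa xb (key a b xa xb hx)
    obtain ⟨k, hk, _⟩ := hf'se g hcomp'
    set φ : u.obj X ⟶ u.obj Y := eqToHom eX.symm ≫ u.map k with hφdef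
    have hφ : ∀ i, u.map (g i) = u.map (f i) ≫ φ := by
      intro i
      rw [← hk i, u.map_comp, hf' i, hφdef, Category.assoc]
    obtain ⟨h, ⟨hhφ, hh⟩, huniq⟩ := hfin g φ hφ
    refine ⟨h, hh, ?_⟩
    intro h' hh'
    have hcomp'' : Compatible (fun i => u.map (f i)) (fun i => u.map (g i)) := by
      intro Z a b xa xb hx
      simp only [hφ a, hφ b, ← Category.assoc, hx]
    obtain ⟨ψ, _, hψu⟩ := hsur (fun i => u.map (g i)) hcomp''
    have h1 : u.map h' = ψ := hψu _ (fun i => by rw [← u.map_comp, hh' i])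
    have h2 : φ = ψ := hψu _ (fun i => (hφ i).symm)
    exact huniq h' ⟨h1.trans h2.symm, hh'⟩
end

section
/- Let u : T → S be a functor, f_α : Y_α → X_α a family of u-cartesian arrows, π_α : X → Y_α a family in the fiber over S, and p_α = f_α ∘ π_α, all as in a commuting double diagram over φ_α : S → S_α. Then π_α is a product cone in the fiber T_S if and only if the family p_α is u-cartesian. -/
open CategoryTheory

universe w v u v₂ u₂

variable {C : Type u} [Category.{v} C] {B : Type u₂} [Category.{v₂} B]

/-- An arrow is vertical (lies in a fiber) if it sits over an identity. -/
def Vert (u : C ⥤ B) {X Y : C} (h : X ⟶ Y) : Prop :=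
  ∃ e : u.obj X = u.obj Y, u.map h = eqToHom e

/-- `f : Y ⟶ X` is `u`-cartesian: any `g : Z ⟶ X` sitting over `ψ ≫ u.map f` factors
uniquely through `f` via an arrow over `ψ`. -/
def CartesianArrow (u : C ⥤ B) {Y X : C} (f : Y ⟶ X) : Prop :=
  ∀ {Z : C} (g : Z ⟶ X) (ψ : u.obj Z ⟶ u.obj Y),
    u.map g = ψ ≫ u.map f → ∃! h : Z ⟶ Y, u.map h = ψ ∧ h ≫ f = g

/-- A family `f i : X ⟶ Xd i` is `u`-cartesian: any family `g i : Y ⟶ Xd i` over the same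
base family (with `u.obj Y = u.obj X`) factors through `X` via a unique vertical arrow. -/
def CartesianFamily (u : C ⥤ B) {ι : Type w} {X : C} {Xd : ι → C}
    (f : ∀ i, X ⟶ Xd i) : Prop :=
  ∀ {Y : C} (e : u.obj Y = u.obj X) (g : ∀ i, Y ⟶ Xd i),
    (∀ i, u.map (g i) = eqToHom e ≫ u.map (f i)) →
    ∃! h : Y ⟶ X, u.map h = eqToHom e ∧ ∀ i, h ≫ f i = g i

/-- A family `f i : X ⟶ Xd i` is `u`-initial: any family `g i : Y ⟶ Xd i` sitting over
`φ ≫ u.map (f i)` factors through `X` via a unique arrow over `φ`. -/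
def InitialFamily (u : C ⥤ B) {ι : Type w} {X : C} {Xd : ι → C}
    (f : ∀ i, X ⟶ Xd i) : Prop :=
  ∀ {Y : C} (g : ∀ i, Y ⟶ Xd i) (φ : u.obj Y ⟶ u.obj X),
    (∀ i, u.map (g i) = φ ≫ u.map (f i)) →
    ∃! h : Y ⟶ X, u.map h = φ ∧ ∀ i, h ≫ f i = g i

/-- A vertical family `π i : X ⟶ Yd i` is a product cone in the fiber: every vertical
family from an object of the same fiber factors through it via a unique vertical arrow. -/
def IsFiberProduct (u : C ⥤ B) {ι : Type w} {X : C} {Yd : ι → C}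
    (π : ∀ i, X ⟶ Yd i) : Prop :=
  ∀ {Y : C} (e : u.obj Y = u.obj X) (h : ∀ i, Y ⟶ Yd i),
    (∀ i, Vert u (h i)) →
    ∃! g : Y ⟶ X, u.map g = eqToHom e ∧ ∀ i, g ≫ π i = h i

/-- `u` is a prefibration: it creates cartesian arrows. -/
def Prefibration (u : C ⥤ B) : Prop :=
  ∀ (X : C) (S0 : B) (φ : S0 ⟶ u.obj X),
    ∃ (Y : C) (f : Y ⟶ X) (e : u.obj Y = S0),
      CartesianArrow u f ∧ u.map f = eqToHom e ≫ φ

/-- `u` is a fibration: a prefibration in which cartesian arrows compose. -/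
def Fibration (u : C ⥤ B) : Prop :=
  Prefibration u ∧ ∀ {Z Y X : C} (g : Z ⟶ Y) (f : Y ⟶ X),
    CartesianArrow u g → CartesianArrow u f → CartesianArrow u (g ≫ f)

/-- Technical lemma (i): given cartesian arrows `f i : Yd i ⟶ Xd i` and a vertical family
`π i : X ⟶ Yd i`, the family `π` is a product cone in the fiber iff the composite family
`p i = π i ≫ f i` is `u`-cartesian. -/
theorem isFiberProduct_iff_cartesianFamily_comp (u : C ⥤ B)
    {ι : Type w} {X : C} {Yd Xd : ι → C}
    (f : ∀ i, Yd i ⟶ Xd i) (π : ∀ i, X ⟶ Yd i)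
    (hf : ∀ i, CartesianArrow u (f i)) (hπ : ∀ i, Vert u (π i)) :
    IsFiberProduct u π ↔ CartesianFamily u (fun i => π i ≫ f i) := by
  have eπ : ∀ i, u.obj X = u.obj (Yd i) := fun i => (hπ i).choose
  have hπm : ∀ i, u.map (π i) = eqToHom (eπ i) := fun i => (hπ i).choose_spec
  constructor
  · intro hP Y e g hg
    have key : ∀ i, ∃! h : Y ⟶ Yd i,
        u.map h = eqToHom (e.trans (eπ i)) ∧ h ≫ f i = g i := by
      intro i
      apply hf i (g i)
      rw [hg i, Functor.map_comp, hπm i, ← Category.assoc, eqToHom_trans]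
    set h : ∀ i, Y ⟶ Yd i := fun i => (key i).choose with hh
    have hspec : ∀ i, u.map (h i) = eqToHom (e.trans (eπ i)) ∧ h i ≫ f i = g i :=
      fun i => (key i).choose_spec.1
    obtain ⟨g', ⟨hg'map, hg'comp⟩, huniq⟩ :=
      hP e h (fun i => ⟨e.trans (eπ i), (hspec i).1⟩)
    refine ⟨g', ⟨hg'map, fun i => ?_⟩, fun y ⟨hy1, hy2⟩ => ?_⟩
    · rw [← Category.assoc, hg'comp i, (hspec i).2]
    · refine huniq y ⟨hy1, fun i => ?_⟩
      refine ((key i).choose_spec.2 (y ≫ π i) ⟨?_, ?_⟩)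
      · rw [Functor.map_comp, hy1, hπm i, eqToHom_trans]
      · rw [Category.assoc]; exact hy2 i
  · intro hC Y e h hv
    have hg : ∀ i, u.map (h i ≫ f i) = eqToHom e ≫ u.map (π i ≫ f i) := by
      intro i
      obtain ⟨eh, hhm⟩ := hv i
      rw [Functor.map_comp, Functor.map_comp, hhm, hπm i, ← Category.assoc,
        eqToHom_trans]
    obtain ⟨g', ⟨hg'map, hg'comp⟩, huniq⟩ := hC e (fun i => h i ≫ f i) hg
    refine ⟨g', ⟨hg'map, fun i => ?_⟩, fun y ⟨hy1, hy2⟩ => ?_⟩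
    · -- g' ≫ π i = h i, via uniqueness of cartesian factorization of f i
      obtain ⟨eh, hhm⟩ := hv i
      obtain ⟨w, _, wuniq⟩ := hf i (h i ≫ f i) (eqToHom (e.trans (eπ i))) (by
        rw [hg i, Functor.map_comp, hπm i, ← Category.assoc, eqToHom_trans])
      have h1 : g' ≫ π i = w := wuniq _ ⟨by
        rw [Functor.map_comp, hg'map, hπm i, eqToHom_trans], by
        rw [Category.assoc]; exact hg'comp i⟩
      have h2 : h i = w := wuniq _ ⟨by rw [hhm], rfl⟩
      rw [h1, h2]
    · refine huniq y ⟨hy1, fun i => ?_⟩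
      simp only [← Category.assoc, hy2 i]
end

section
/- For a prefibration u : T → S, the following are equivalent: (i) the composite of a u-cartesian arrow with a u-cartesian family is u-cartesian; (ii) every u-cartesian family is u-initial; (iii) u-cartesian families compose. -/
open CategoryTheory

universe w v u v₂ u₂

variable {C : Type u} [Category.{v} C] {B : Type u₂} [Category.{v₂} B]

/-- (i) Cartesian arrows compose with cartesian families. -/
def ArrowsComposeWithCartFamilies (u : C ⥤ B) : Prop :=
  ∀ {Y X : C} (g : Y ⟶ X) {ι : Type w} {Xd : ι → C} (f : ∀ i, X ⟶ Xd i),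
    CartesianArrow u g → CartesianFamily u f →
    CartesianFamily u (fun i => g ≫ f i)

/-- (ii) Every cartesian family is initial. -/
def CartFamiliesAreInitial (u : C ⥤ B) : Prop :=
  ∀ {ι : Type w} {X : C} {Xd : ι → C} (f : ∀ i, X ⟶ Xd i),
    CartesianFamily u f → InitialFamily u f

/-- (iii) Cartesian families compose. -/
def CartFamiliesCompose (u : C ⥤ B) : Prop :=
  ∀ {ι : Type w} {X : C} {Xd : ι → C} (f : ∀ i, X ⟶ Xd i)
    {κ : ι → Type w} {Zd : ∀ i, κ i → C} (h : ∀ i j, Xd i ⟶ Zd i j),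
    CartesianFamily u f → (∀ i, CartesianFamily u (h i)) →
    CartesianFamily u (fun p : Σ i, κ i => f p.1 ≫ h p.1 p.2)

theorem aux_ii_to_i (u : C ⥤ B) (H : CartFamiliesAreInitial.{w} u) :
    ArrowsComposeWithCartFamilies.{w} u := by
  intro Y X g ι Xd f hg hf Z e k hk
  obtain ⟨m, ⟨hm1, hm2⟩, hmu⟩ := H f hf k (eqToHom e ≫ u.map g) (fun i => by
    rw [hk i]; simp [Functor.map_comp])
  obtain ⟨h, ⟨hh1, hh2⟩, hhu⟩ := hg m (eqToHom e) (by rw [hm1])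
  refine ⟨h, ⟨hh1, fun i => by rw [← Category.assoc, hh2, hm2]⟩, ?_⟩
  rintro h' ⟨hh'1, hh'2⟩
  have hm' : h' ≫ g = m := hmu (h' ≫ g)
    ⟨by simp [Functor.map_comp, hh'1], fun i => by simpa using hh'2 i⟩
  exact hhu h' ⟨hh'1, hm'⟩

theorem aux_i_to_ii (u : C ⥤ B) (hu : Prefibration u)
    (H : ArrowsComposeWithCartFamilies.{w} u) : CartFamiliesAreInitial.{w} u := by
  intro ι X Xd f hf Y g φ hg
  obtain ⟨Y', c, e, hc, hce⟩ := hu X (u.obj Y) φ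
  have hcomp : CartesianFamily u (fun i => c ≫ f i) := H c f hc hf
  have he' : u.obj Y = u.obj Y' := e.symm
  obtain ⟨h, ⟨hh1, hh2⟩, hhu⟩ := hcomp he' g (fun i => by
    rw [hg i]; simp [Functor.map_comp, hce])
  refine ⟨h ≫ c, ⟨by rw [Functor.map_comp, hh1, hce]; simp, fun i => by
    rw [Category.assoc]; exact hh2 i⟩, ?_⟩
  rintro k ⟨hk1, hk2⟩
  obtain ⟨h', ⟨hh'1, hh'2⟩, hh'u⟩ := hc k (eqToHom he') (by rw [hk1, hce]; simp)
  have heq : h' = h := hhu h' ⟨hh'1, fun i => by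
    rw [← Category.assoc, hh'2]; exact hk2 i⟩
  rw [← hh'2, heq]

theorem aux_ii_to_iii (u : C ⥤ B) (H : CartFamiliesAreInitial.{w} u) :
    CartFamiliesCompose.{w} u := by
  intro ι X Xd f κ Zd h hf hh Y e g hg
  have hk : ∀ i, ∃! k : Y ⟶ Xd i, u.map k = eqToHom e ≫ u.map (f i) ∧
      ∀ j, k ≫ h i j = g ⟨i, j⟩ := fun i =>
    H (h i) (hh i) (fun j => g ⟨i, j⟩) (eqToHom e ≫ u.map (f i)) (fun j => by
      rw [hg ⟨i, j⟩]; simp [Functor.map_comp])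
  choose k hkp hku using hk
  obtain ⟨m, ⟨hm1, hm2⟩, hmu⟩ := hf e k (fun i => (hkp i).1)
  refine ⟨m, ⟨hm1, fun p => by
    rw [← Category.assoc, hm2 p.1]; exact (hkp p.1).2 p.2⟩, ?_⟩
  rintro m' ⟨hm'1, hm'2⟩
  have hkeq : ∀ i, m' ≫ f i = k i := fun i =>
    hku i (m' ≫ f i) ⟨by simp [Functor.map_comp, hm'1], fun j => by
      simpa using hm'2 ⟨i, j⟩⟩
  exact hmu m' ⟨hm'1, hkeq⟩

theorem cartArrow_family (u : C ⥤ B) {Y X : C} (c : Y ⟶ X)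
    (hc : CartesianArrow u c) :
    CartesianFamily u (fun _ : PUnit.{w + 1} => c) := by
  intro Z e g hg
  obtain ⟨h, ⟨hh1, hh2⟩, hhu⟩ := hc (g PUnit.unit) (eqToHom e) (hg PUnit.unit)
  exact ⟨h, ⟨hh1, fun i => by cases i; exact hh2⟩,
    fun h' ⟨h1, h2⟩ => hhu h' ⟨h1, h2 PUnit.unit⟩⟩

theorem aux_iii_to_ii (u : C ⥤ B) (hu : Prefibration u)
    (H : CartFamiliesCompose.{w} u) : CartFamiliesAreInitial.{w} u := by
  intro ι X Xd f hf Y g φ hg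
  obtain ⟨Y', c, e, hc, hce⟩ := hu X (u.obj Y) φ
  have hcomp : CartesianFamily u
      (fun p : Σ _ : PUnit.{w + 1}, ι => c ≫ f p.2) :=
    H (fun _ : PUnit.{w + 1} => c) (κ := fun _ => ι)
      (Zd := fun _ i => Xd i) (fun _ i => f i) (cartArrow_family u c hc)
      (fun _ => hf)
  have he' : u.obj Y = u.obj Y' := e.symm
  obtain ⟨h, ⟨hh1, hh2⟩, hhu⟩ := hcomp he' (fun p => g p.2) (fun p => by
    rw [hg p.2]; simp [Functor.map_comp, hce])
  refine ⟨h ≫ c, ⟨by rw [Functor.map_comp, hh1, hce]; simp, fun i => by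
    rw [Category.assoc]; exact hh2 ⟨PUnit.unit, i⟩⟩, ?_⟩
  rintro k ⟨hk1, hk2⟩
  obtain ⟨h', ⟨hh'1, hh'2⟩, hh'u⟩ := hc k (eqToHom he') (by rw [hk1, hce]; simp)
  have heq : h' = h := hhu h' ⟨hh'1, fun p => by
    rw [← Category.assoc, hh'2]; exact hk2 p.2⟩
  rw [← hh'2, heq]

/-- For a prefibration, the three conditions are equivalent. -/
theorem prefibration_tfae (u : C ⥤ B) (hu : Prefibration u) :
    (ArrowsComposeWithCartFamilies.{w} u ↔ CartFamiliesAreInitial.{w} u) ∧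
    (CartFamiliesAreInitial.{w} u ↔ CartFamiliesCompose.{w} u) :=
  ⟨⟨fun H => aux_i_to_ii u hu H, fun H => aux_ii_to_i u H⟩,
   ⟨fun H => aux_ii_to_iii u H, fun H => aux_iii_to_ii u hu H⟩⟩
end

section
/- For a prefibration u : T → S, cartesian arrows compose with cartesian families if and only if u is a fibration (cartesian arrows compose) and products in the fibers are stable under pullback along cartesian arrows. -/
open CategoryTheory

universe w v u v₂ u₂

variable {C : Type u} [Category.{v} C] {B : Type u₂} [Category.{v₂} B]

/-- Products in the fibers are stable: pulling back a fiber product cone along cartesian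
arrows yields a fiber product cone. -/
def ProductsStable (u : C ⥤ B) : Prop :=
  ∀ {ι : Type w} {Y X : C} (g : Y ⟶ X) {Yd Xd : ι → C}
    (gα : ∀ i, Yd i ⟶ Xd i) (ρ : ∀ i, Y ⟶ Yd i) (π : ∀ i, X ⟶ Xd i),
    CartesianArrow u g → (∀ i, CartesianArrow u (gα i)) →
    (∀ i, Vert u (ρ i)) → (∀ i, Vert u (π i)) →
    (∀ i, ρ i ≫ gα i = g ≫ π i) →
    IsFiberProduct u π → IsFiberProduct u ρ

section Aux

variable {u : C ⥤ B}

/-- Composites of cartesian arrows are cartesian. -/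
lemma cartesianArrow_comp {Z Y X : C} {g : Z ⟶ Y} {f : Y ⟶ X}
    (hg : CartesianArrow u g) (hf : CartesianArrow u f) : CartesianArrow u (g ≫ f) := by
  intro W k ψ hk
  obtain ⟨h₁, ⟨hψ₁, hc₁⟩, huniq₁⟩ := hf k (ψ ≫ u.map g)
    (by rw [hk, u.map_comp, Category.assoc])
  obtain ⟨h, ⟨hψ, hc⟩, huniq⟩ := hg h₁ ψ hψ₁
  refine ⟨h, ⟨hψ, by rw [← Category.assoc, hc, hc₁]⟩, ?_⟩
  rintro h' ⟨hψ', hc'⟩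
  have hfac : h' ≫ g = h₁ := by
    refine huniq₁ _ ⟨by rw [u.map_comp, hψ'], ?_⟩
    rw [Category.assoc]; exact hc'
  exact huniq h' ⟨hψ', hfac⟩

/-- A vertical fiber-product cone is a cartesian family. -/
lemma isFiberProduct_cartesianFamily {ι : Type w} {X : C} {Yd : ι → C}
    {π : ∀ i, X ⟶ Yd i} (hv : ∀ i, Vert u (π i)) (hp : IsFiberProduct u π) :
    CartesianFamily u π := by
  intro Y e g hg
  have hgv : ∀ i, Vert u (g i) := fun i => by
    obtain ⟨p, hp'⟩ := hv i
    exact ⟨e.trans p, by rw [hg i, hp', eqToHom_trans]⟩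
  exact hp e g hgv

/-- A vertical fiber-product cone composed with cartesian arrows is a cartesian family. -/
lemma fiberProduct_comp_cartesianFamily {ι : Type w} {X : C} {Xi Xd : ι → C}
    {π : ∀ i, X ⟶ Xi i} {c : ∀ i, Xi i ⟶ Xd i} {F : ∀ i, X ⟶ Xd i}
    (hv : ∀ i, Vert u (π i)) (hc : ∀ i, CartesianArrow u (c i))
    (hp : IsFiberProduct u π) (hF : ∀ i, F i = π i ≫ c i) :
    CartesianFamily u F := by
  intro Y e g hg
  choose p hπ using hv
  have key : ∀ i, ∃! h : Y ⟶ Xi i,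
      u.map h = eqToHom (e.trans (p i)) ∧ h ≫ c i = g i := by
    intro i
    apply hc i (g i) (eqToHom (e.trans (p i)))
    rw [hg i, hF i, u.map_comp, hπ i, ← Category.assoc, eqToHom_trans]
  choose h hspec huniqh using key
  have hhv : ∀ i, Vert u (h i) := fun i => ⟨e.trans (p i), (hspec i).1⟩
  obtain ⟨k, ⟨hk1, hk2⟩, hkuniq⟩ := hp e h hhv
  refine ⟨k, ⟨hk1, fun i => by rw [hF i, ← Category.assoc, hk2 i, (hspec i).2]⟩, ?_⟩
  rintro k' ⟨hk1', hk2'⟩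
  refine hkuniq k' ⟨hk1', fun i => ?_⟩
  refine huniqh i _ ⟨by rw [u.map_comp, hk1', hπ i, eqToHom_trans], ?_⟩
  rw [Category.assoc, ← hF i]; exact hk2' i

/-- If `F i = π i ≫ c i` is a cartesian family with `π` vertical and `c` cartesian,
then `π` is a fiber-product cone. -/
lemma cartesianFamily_fiberProduct {ι : Type w} {X : C} {Xi Xd : ι → C}
    {π : ∀ i, X ⟶ Xi i} {c : ∀ i, Xi i ⟶ Xd i} {F : ∀ i, X ⟶ Xd i}
    (hv : ∀ i, Vert u (π i)) (hc : ∀ i, CartesianArrow u (c i))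
    (hf : CartesianFamily u F) (hF : ∀ i, F i = π i ≫ c i) :
    IsFiberProduct u π := by
  intro Y e h hhv
  choose p hπ using hv
  choose q hq using hhv
  obtain ⟨g, ⟨hg1, hg2⟩, hguniq⟩ := hf e (fun i => h i ≫ c i) (fun i => by
    rw [u.map_comp, hq i, hF i, u.map_comp, hπ i, ← Category.assoc, eqToHom_trans])
  refine ⟨g, ⟨hg1, fun i => ?_⟩, ?_⟩
  · obtain ⟨w, hw, hwu⟩ := hc i (h i ≫ c i) (eqToHom (q i)) (by rw [u.map_comp, hq i])
    have e1 : g ≫ π i = w := by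
      refine hwu _ ⟨by rw [u.map_comp, hg1, hπ i, eqToHom_trans], ?_⟩
      rw [Category.assoc, ← hF i]; exact hg2 i
    have e2 : h i = w := hwu _ ⟨hq i, rfl⟩
    rw [e1, ← e2]
  · rintro k ⟨hk1, hk2⟩
    exact hguniq k ⟨hk1, fun i => by rw [hF i, ← Category.assoc, hk2 i]⟩

/-- Stability of fiber products follows from the composite family being cartesian. -/
lemma prodStable_of_family {ι : Type w} {Y X : C} {g : Y ⟶ X} {Yd Xd : ι → C}
    {gα : ∀ i, Yd i ⟶ Xd i} {ρ : ∀ i, Y ⟶ Yd i} {π : ∀ i, X ⟶ Xd i}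
    {F : ∀ i, Y ⟶ Xd i}
    (hgα : ∀ i, CartesianArrow u (gα i))
    (hρ : ∀ i, Vert u (ρ i))
    (hsq : ∀ i, ρ i ≫ gα i = g ≫ π i)
    (hfam : CartesianFamily u F) (hF : ∀ i, F i = g ≫ π i) :
    IsFiberProduct u ρ := by
  intro Y' e h hhv
  choose p hρm using hρ
  choose q hq using hhv
  obtain ⟨k, ⟨hk1, hk2⟩, hkuniq⟩ := hfam e (fun i => h i ≫ gα i) (fun i => by
    rw [u.map_comp, hq i, hF i, ← hsq i, u.map_comp, hρm i, ← Category.assoc,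
      eqToHom_trans])
  refine ⟨k, ⟨hk1, fun i => ?_⟩, ?_⟩
  · obtain ⟨w, hw, hwu⟩ := hgα i (h i ≫ gα i) (eqToHom (q i)) (by rw [u.map_comp, hq i])
    have e1 : k ≫ ρ i = w := by
      refine hwu _ ⟨by rw [u.map_comp, hk1, hρm i, eqToHom_trans], ?_⟩
      rw [Category.assoc, hsq i, ← hF i]; exact hk2 i
    have e2 : h i = w := hwu _ ⟨hq i, rfl⟩
    rw [e1, ← e2]
  · rintro k' ⟨hk1', hk2'⟩
    exact hkuniq k' ⟨hk1', fun i => by rw [hF i, ← hsq i, ← Category.assoc, hk2' i]⟩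

end Aux

/-- For a prefibration, cartesian arrows compose with cartesian families iff `u` is a
fibration and products in the fibers are stable. -/
theorem arrowsComposeWithCartFamilies_iff (u : C ⥤ B) (hu : Prefibration u) :
    ArrowsComposeWithCartFamilies.{w} u ↔ Fibration u ∧ ProductsStable.{w} u := by
  constructor
  · intro hcf
    refine ⟨⟨hu, fun g f hg hf => cartesianArrow_comp hg hf⟩, ?_⟩
    intro ι Y X g Yd Xd gα ρ π hg hgα hρv hπv hsq hπ
    exact prodStable_of_family hgα hρv hsq
      (hcf g π hg (isFiberProduct_cartesianFamily hπv hπ)) (fun i => rfl)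
  · rintro ⟨-, hps⟩
    intro Y X g ι Xd f hg hf
    -- cartesian lifts `c i` of `u.map (f i)` over `u.obj X`
    have hC : ∀ i, ∃ (Xi : C) (c : Xi ⟶ Xd i) (e : u.obj Xi = u.obj X),
        CartesianArrow u c ∧ u.map c = eqToHom e ≫ u.map (f i) :=
      fun i => hu (Xd i) (u.obj X) (u.map (f i))
    choose Xi c ec hc hcm using hC
    -- vertical `π i : X ⟶ Xi i` with `π i ≫ c i = f i`
    have hP : ∀ i, ∃! h : X ⟶ Xi i,
        u.map h = eqToHom (ec i).symm ∧ h ≫ c i = f i := by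
      intro i
      apply hc i (f i) (eqToHom (ec i).symm)
      rw [hcm i, ← Category.assoc, eqToHom_trans, eqToHom_refl, Category.id_comp]
    choose π hπspec hπuniq using hP
    have hπv : ∀ i, Vert u (π i) := fun i => ⟨(ec i).symm, (hπspec i).1⟩
    -- cartesian lifts `gα i` of `u.map g ≫ eqToHom (ec i).symm` over `u.obj Y`
    have hG : ∀ i, ∃ (Yi : C) (gα : Yi ⟶ Xi i) (e : u.obj Yi = u.obj Y),
        CartesianArrow u gα ∧ u.map gα = eqToHom e ≫ u.map g ≫ eqToHom (ec i).symm :=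
      fun i => hu (Xi i) (u.obj Y) (u.map g ≫ eqToHom (ec i).symm)
    choose Yi gα ey hgα hgαm using hG
    -- vertical `ρ i : Y ⟶ Yi i` with `ρ i ≫ gα i = g ≫ π i`
    have hR : ∀ i, ∃! h : Y ⟶ Yi i,
        u.map h = eqToHom (ey i).symm ∧ h ≫ gα i = g ≫ π i := by
      intro i
      apply hgα i (g ≫ π i) (eqToHom (ey i).symm)
      rw [u.map_comp, (hπspec i).1, hgαm i, ← Category.assoc, eqToHom_trans,
        eqToHom_refl, Category.id_comp]
    choose ρ hρspec hρuniq using hR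
    have hρv : ∀ i, Vert u (ρ i) := fun i => ⟨(ey i).symm, (hρspec i).1⟩
    -- `π` is a fiber product cone since `f = π ≫ c` is a cartesian family
    have hπfp : IsFiberProduct u π :=
      cartesianFamily_fiberProduct hπv hc hf (fun i => ((hπspec i).2).symm)
    -- stability gives that `ρ` is a fiber product cone
    have hρfp : IsFiberProduct u ρ :=
      hps g gα ρ π hg hgα hρv hπv (fun i => (hρspec i).2) hπfp
    -- conclude: `g ≫ f i = ρ i ≫ (gα i ≫ c i)` with `gα i ≫ c i` cartesian
    have hfin : CartesianFamily u (fun i => g ≫ f i) :=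
      fiberProduct_comp_cartesianFamily hρv
        (fun i => cartesianArrow_comp (hgα i) (hc i)) hρfp (fun i => by
          rw [← Category.assoc, (hρspec i).2, Category.assoc, (hπspec i).2])
    assumption
end

section
/- A prefibration u : T → S is faithful if and only if each fiber T_S is a poset (any two parallel arrows in a fiber are equal). -/
open CategoryTheory

universe w v u v₂ u₂

variable {C : Type u} [Category.{v} C] {B : Type u₂} [Category.{v₂} B]

/-- A prefibration is faithful iff each fiber is a poset (any two parallel vertical
arrows are equal). -/
theorem prefibration_faithful_iff_fibers_poset (u : C ⥤ B) (hu : Prefibration u) :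
    u.Faithful ↔ ∀ {X Y : C} (f g : X ⟶ Y), Vert u f → Vert u g → f = g := by
  constructor
  · intro hF X Y f g hf hg
    obtain ⟨e, hf⟩ := hf
    obtain ⟨e', hg⟩ := hg
    exact hF.map_injective (hf.trans hg.symm)
  · intro hp
    constructor
    intro X Y f g hfg
    obtain ⟨W, c, e, hc, huc⟩ := hu Y (u.obj X) (u.map f)
    have hψf : u.map f = eqToHom e.symm ≫ u.map c := by
      rw [huc, eqToHom_trans_assoc, eqToHom_refl, Category.id_comp]
    have hψg : u.map g = eqToHom e.symm ≫ u.map c := by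
      rw [← hfg]; exact hψf
    obtain ⟨hf, ⟨hfmap, hfcomp⟩, _⟩ := hc f (eqToHom e.symm) hψf
    obtain ⟨hg', ⟨hgmap, hgcomp⟩, _⟩ := hc g (eqToHom e.symm) hψg
    have : hf = hg' := hp hf hg' ⟨e.symm, hfmap⟩ ⟨e.symm, hgmap⟩
    rw [← hfcomp, ← hgcomp, this]
end

section
/- Every pretopological functor is faithful. -/
open CategoryTheory

universe w v u v₂ u₂

variable {C : Type u} [Category.{v} C] {B : Type u₂} [Category.{v₂} B]

/-- `u` is pretopological: it creates (possibly large) cartesian families. -/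
def Pretopological (u : C ⥤ B) : Prop :=
  ∀ {ι : Type (max u v)} {S0 : B} (Xd : ι → C) (φ : ∀ i, S0 ⟶ u.obj (Xd i)),
    ∃ (X : C) (eX : u.obj X = S0) (f : ∀ i, X ⟶ Xd i),
      CartesianFamily u f ∧ ∀ i, u.map (f i) = eqToHom eX ≫ φ i

/-- Every pretopological functor is faithful. -/
theorem faithful_of_pretopological (u : C ⥤ B) (hu : Pretopological u) :
    u.Faithful := by
  constructor
  intro X Y f g hfg
  by_contra hne
  classical
  set ι : Type (max u v) := Σ A : C, Σ B₀ : C, (A ⟶ B₀) with hι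
  obtain ⟨X', eX, f', hcart, hover⟩ :=
    hu (ι := ι) (S0 := u.obj X) (fun _ => Y) (fun _ => u.map f)
  -- for each set s : Set ι, get a vertical lift h_s : X ⟶ X'
  have key : ∀ s : Set ι, ∃! h : X ⟶ X', u.map h = eqToHom eX.symm ∧
      ∀ i, h ≫ f' i = (if i ∈ s then f else g) := by
    intro s
    apply hcart eX.symm (fun i => if i ∈ s then f else g)
    intro i
    rw [hover i, ← Category.assoc, eqToHom_trans, eqToHom_refl, Category.id_comp]
    by_cases h : i ∈ s <;> simp [h, hfg]
  let F : Set ι → (X ⟶ X') := fun s => (key s).exists.choose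
  have hF : ∀ s i, F s ≫ f' i = (if i ∈ s then f else g) := fun s i =>
    ((key s).exists.choose_spec.2 i)
  have hFinj : Function.Injective F := by
    intro s t hst
    ext i
    have := hF s i
    rw [hst, hF t i] at this
    by_cases hs : i ∈ s <;> by_cases ht : i ∈ t <;>
      simp [hs, ht] at this ⊢ <;> tauto
  have hGinj : Function.Injective (fun s : Set ι => (⟨X, X', F s⟩ : ι)) := by
    intro s t hst
    apply hFinj
    have h2 := (Sigma.mk.inj_iff.mp hst).2
    have h3 := (Sigma.mk.inj_iff.mp (eq_of_heq h2)).2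
    exact eq_of_heq h3
  exact Function.cantor_injective _ hGinj
end
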